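/- arXiv:2107.02725 — 2 statements merged into one kernel-verified Lean document; each statement's English description precedes it below -/
import Mathlib

section
/- Let (X, d) be a compact metric space, p, q ∈ [1,∞] Hölder conjugates, μ a finite signed Borel measure on X, and f : X → ℝ Lipschitz. Then |∫ f dμ| ≤ ‖μ‖_{pK} · ‖f‖_{qL}, where ‖μ‖_{pK} = inf over zero-charge signed measures ξ of (‖ξ‖_{KR}^p + ‖μ − ξ‖_{TV}^p)^{1/p} and ‖f‖_{qL} = (‖f‖_L^q + ‖f‖_∞^q)^{1/q}. -/
open MeasureTheory ENNReal Filter Topology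

noncomputable section

/-- The two-dimensional `ℓ^p` expression, interpreted as a maximum when `p = ∞`. -/
def lp2 (p : ℝ≥0∞) (a b : ℝ) : ℝ :=
  if p = ∞ then max a b else (a ^ p.toReal + b ^ p.toReal) ^ (1 / p.toReal)

/-- Hölder conjugacy of `p, q ∈ [1, ∞]`. -/
def HolderConj (p q : ℝ≥0∞) : Prop := 1 ≤ p ∧ 1 ≤ q ∧ 1 / p + 1 / q = 1

variable {X : Type*} [MeasurableSpace X]

/-- Total variation norm of a finite signed Borel measure. -/
def TVnorm (s : SignedMeasure X) : ℝ := (s.totalVariation Set.univ).toReal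

/-- Integral of a function against a signed measure. -/
def sIntegral (s : SignedMeasure X) (f : X → ℝ) : ℝ :=
  ∫ x, f x ∂s.toJordanDecomposition.posPart - ∫ x, f x ∂s.toJordanDecomposition.negPart

/-- The Kantorovich–Rubinstein norm of a (zero-charge) signed measure. -/
def KRnorm [PseudoMetricSpace X] (ξ : SignedMeasure X) : ℝ :=
  sInf {r : ℝ | ∃ π : Measure (X × X), IsFiniteMeasure π ∧
    (∀ A : Set X, MeasurableSet A →
      ξ A = (π (Set.univ ×ˢ A)).toReal - (π (A ×ˢ Set.univ)).toReal) ∧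
    r = ∫ z, dist z.1 z.2 ∂π}

/-- The `p`-Kantorovich norm on finite signed measures. -/
def pKnorm [PseudoMetricSpace X] (p : ℝ≥0∞) (μ : SignedMeasure X) : ℝ :=
  sInf {r : ℝ | ∃ ξ : SignedMeasure X, ξ Set.univ = 0 ∧
    r = lp2 p (KRnorm ξ) (TVnorm (μ - ξ))}

/-- The Lipschitz constant (seminorm) of `f`. -/
def lipConst [PseudoMetricSpace X] (f : X → ℝ) : ℝ :=
  sInf {K : ℝ | 0 ≤ K ∧ ∀ x y, |f x - f y| ≤ K * dist x y}

/-- The sup norm of `f`. -/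
def supNorm (f : X → ℝ) : ℝ := ⨆ x, |f x|

/-- The `q`-Lipschitz norm. -/
def qLnorm [PseudoMetricSpace X] (q : ℝ≥0∞) (f : X → ℝ) : ℝ :=
  lp2 q (lipConst f) (supNorm f)

/-- The support of a measure: points all of whose open neighbourhoods have
positive measure. -/
def msupport {Y : Type*} [TopologicalSpace Y] [MeasurableSpace Y] (π : Measure Y) : Set Y :=
  {y | ∀ U : Set Y, IsOpen U → y ∈ U → π U ≠ 0}

end

noncomputable section AuxLemmas

/-- Generic `sInf` bound: if `v ≤ c * r` for all `r` in a nonempty set `S`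
and `0 ≤ c`, then `v ≤ c * sInf S`. -/
lemma le_mul_csInf_aux {c v : ℝ} (hc : 0 ≤ c) {S : Set ℝ} (hS : S.Nonempty)
    (h : ∀ r ∈ S, v ≤ c * r) : v ≤ c * sInf S := by
  rcases hc.eq_or_lt with hc0 | hc0
  · obtain ⟨r, hr⟩ := hS
    have := h r hr
    simpa [← hc0] using this
  · have : v / c ≤ sInf S := le_csInf hS fun r hr => (div_le_iff₀' hc0).mpr (h r hr)
    calc v = c * (v / c) := by field_simp
    _ ≤ c * sInf S := by gcongr

lemma signedMeasure_apply_eq {X : Type*} [MeasurableSpace X] (s : SignedMeasure X)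
    {A : Set X} (hA : MeasurableSet A) :
    s A = (s.toJordanDecomposition.posPart A).toReal
        - (s.toJordanDecomposition.negPart A).toReal := by
  conv_lhs => rw [← s.toSignedMeasure_toJordanDecomposition]
  exact Measure.toSignedMeasure_sub_apply hA

/-- Two-term Hölder inequality phrased with the `lp2` expressions. -/
lemma holder_lp2 {p q : ℝ≥0∞} (hpq : HolderConj p q) {a b c d : ℝ}
    (ha : 0 ≤ a) (hb : 0 ≤ b) (hc : 0 ≤ c) (hd : 0 ≤ d) :
    a * c + b * d ≤ lp2 p a b * lp2 q c d := by
  obtain ⟨hp1, hq1, hsum⟩ := hpq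
  rcases eq_or_ne p ∞ with hp | hp
  · have hq : q = 1 := by
      rw [hp] at hsum
      simp only [one_div, ENNReal.inv_top, zero_add] at hsum
      exact ENNReal.inv_eq_one.mp hsum
    rw [hp, hq]
    rw [lp2, lp2, if_pos rfl, if_neg (by simp : (1:ℝ≥0∞) ≠ ∞)]
    simp only [ENNReal.toReal_one, one_div_one, Real.rpow_one]
    nlinarith [le_max_left a b, le_max_right a b]
  rcases eq_or_ne q ∞ with hq | hq
  · have hp' : p = 1 := by
      rw [hq] at hsum
      simp only [one_div, ENNReal.inv_top, add_zero] at hsum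
      exact ENNReal.inv_eq_one.mp hsum
    rw [hp', hq]
    rw [lp2, lp2, if_pos rfl, if_neg (by simp : (1:ℝ≥0∞) ≠ ∞)]
    simp only [ENNReal.toReal_one, one_div_one, Real.rpow_one]
    nlinarith [le_max_left c d, le_max_right c d]
  · have hp0 : p ≠ 0 := by intro h; rw [h] at hp1; simp at hp1
    have hq0 : q ≠ 0 := by intro h; rw [h] at hq1; simp at hq1
    have hplt : 1 < p := by
      rcases hp1.lt_or_eq with h | h
      · exact h
      · exfalso
        rw [← h, one_div, inv_one] at hsum
        have hq' : (1:ℝ≥0∞)/q = 0 := by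
          calc 1/q = 1 + 1/q - 1 := by rw [ENNReal.add_sub_cancel_left (by simp)]
          _ = 1 - 1 := by rw [hsum]
          _ = 0 := by simp
        rw [one_div, ENNReal.inv_eq_zero] at hq'
        exact hq hq'
    have hqlt : 1 < q := by
      rcases hq1.lt_or_eq with h | h
      · exact h
      · exfalso
        rw [← h, one_div (1:ℝ≥0∞), inv_one, add_comm] at hsum
        have hp' : (1:ℝ≥0∞)/p = 0 := by
          calc 1/p = 1 + 1/p - 1 := by rw [ENNReal.add_sub_cancel_left (by simp)]
          _ = 1 - 1 := by rw [hsum]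
          _ = 0 := by simp
        rw [one_div, ENNReal.inv_eq_zero] at hp'
        exact hp hp'
    have hconj : Real.HolderConjugate p.toReal q.toReal := by
      rw [Real.holderConjugate_iff]
      constructor
      · exact (ENNReal.toReal_lt_toReal (by simp) hp).mpr hplt
      · have := congrArg ENNReal.toReal hsum
        rw [one_div, one_div, ENNReal.toReal_add (ENNReal.inv_ne_top.mpr hp0)
          (ENNReal.inv_ne_top.mpr hq0)] at this
        simpa [ENNReal.toReal_inv] using this
    have key := Real.inner_le_Lp_mul_Lq_of_nonneg (s := (Finset.univ : Finset (Fin 2)))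
      (f := ![a, b]) (g := ![c, d]) hconj
      (by intro i _; fin_cases i <;> simpa) (by intro i _; fin_cases i <;> simpa)
    simp only [Fin.sum_univ_two, Matrix.cons_val_zero, Matrix.cons_val_one,
      Matrix.head_cons] at key
    simpa [lp2, if_neg hp, if_neg hq] using key

lemma lp2_nonneg {p : ℝ≥0∞} {a b : ℝ} (ha : 0 ≤ a) (hb : 0 ≤ b) : 0 ≤ lp2 p a b := by
  unfold lp2
  split
  · exact le_max_of_le_left ha
  · exact Real.rpow_nonneg (by positivity) _

section Main

set_option linter.unusedSectionVars false

variable {X : Type*} [MetricSpace X] [CompactSpace X] [MeasurableSpace X] [BorelSpace X]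

lemma continuous_integrable_aux {Y : Type*} [TopologicalSpace Y] [CompactSpace Y]
    [MeasurableSpace Y] [OpensMeasurableSpace Y] {g : Y → ℝ} (hg : Continuous g)
    (ν : Measure Y) [IsFiniteMeasure ν] : Integrable g ν :=
  hg.integrable_of_hasCompactSupport
    (IsCompact.of_isClosed_subset isCompact_univ (isClosed_tsupport g) (Set.subset_univ _))

lemma TVnorm_nonneg (s : SignedMeasure X) : 0 ≤ TVnorm s := ENNReal.toReal_nonneg

lemma KRnorm_nonneg (ξ : SignedMeasure X) : 0 ≤ KRnorm ξ := by
  apply Real.sInf_nonneg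
  rintro r ⟨π, hfin, _, rfl⟩
  exact integral_nonneg fun z => dist_nonneg

/-- The integral against a signed measure is bounded by the sup bound times total variation. -/
lemma abs_sIntegral_le_TV (η : SignedMeasure X) {f : X → ℝ} (hfc : Continuous f)
    {M : ℝ} (hM : ∀ x, |f x| ≤ M) : |sIntegral η f| ≤ M * TVnorm η := by
  rcases isEmpty_or_nonempty X with hX | hX
  · have hP : η.toJordanDecomposition.posPart = 0 := Measure.eq_zero_of_isEmpty _
    have hN : η.toJordanDecomposition.negPart = 0 := Measure.eq_zero_of_isEmpty _
    have hTV0 : η.totalVariation = 0 := by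
      unfold SignedMeasure.totalVariation; rw [hP, hN, add_zero]
    simp [sIntegral, TVnorm, hP, hN, hTV0]
  set P := η.toJordanDecomposition.posPart
  set N := η.toJordanDecomposition.negPart
  have hM0 : 0 ≤ M := le_trans (abs_nonneg _) (hM hX.some)
  have hIP := continuous_integrable_aux hfc P
  have hIN := continuous_integrable_aux hfc N
  have h1 : |∫ x, f x ∂P| ≤ M * (P Set.univ).toReal := by
    calc |∫ x, f x ∂P| ≤ ∫ x, |f x| ∂P := by simpa [Real.norm_eq_abs] using norm_integral_le_integral_norm (μ := P) f
    _ ≤ ∫ _x, M ∂P := integral_mono hIP.abs (integrable_const M) hM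
    _ = (P Set.univ).toReal * M := by rw [integral_const]; simp [smul_eq_mul, Measure.real]
    _ = M * (P Set.univ).toReal := mul_comm _ _
  have h2 : |∫ x, f x ∂N| ≤ M * (N Set.univ).toReal := by
    calc |∫ x, f x ∂N| ≤ ∫ x, |f x| ∂N := by simpa [Real.norm_eq_abs] using norm_integral_le_integral_norm (μ := N) f
    _ ≤ ∫ _x, M ∂N := integral_mono hIN.abs (integrable_const M) hM
    _ = (N Set.univ).toReal * M := by rw [integral_const]; simp [smul_eq_mul, Measure.real]
    _ = M * (N Set.univ).toReal := mul_comm _ _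
  have hTV : TVnorm η = (P Set.univ).toReal + (N Set.univ).toReal := by
    unfold TVnorm SignedMeasure.totalVariation
    rw [Measure.add_apply, ENNReal.toReal_add (measure_ne_top _ _) (measure_ne_top _ _)]
  calc |sIntegral η f| = |∫ x, f x ∂P - ∫ x, f x ∂N| := rfl
  _ ≤ |∫ x, f x ∂P| + |∫ x, f x ∂N| := abs_sub _ _
  _ ≤ M * (P Set.univ).toReal + M * (N Set.univ).toReal := add_le_add h1 h2
  _ = M * TVnorm η := by rw [hTV, mul_add]


lemma sIntegral_add (s t : SignedMeasure X) {f : X → ℝ} (hfc : Continuous f) :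
    sIntegral (s + t) f = sIntegral s f + sIntegral t f := by
  set P1 := s.toJordanDecomposition.posPart
  set N1 := s.toJordanDecomposition.negPart
  set P2 := t.toJordanDecomposition.posPart
  set N2 := t.toJordanDecomposition.negPart
  set P := (s + t).toJordanDecomposition.posPart
  set N := (s + t).toJordanDecomposition.negPart
  have key : P + (N1 + N2) = N + (P1 + P2) := by
    ext A hA
    have h1 := signedMeasure_apply_eq s hA
    have h2 := signedMeasure_apply_eq t hA
    have h3 := signedMeasure_apply_eq (s + t) hA
    have h4 : (s + t) A = s A + t A := VectorMeasure.add_apply s t A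
    rw [h3, h1, h2] at h4
    have hreal : (P A).toReal + ((N1 A).toReal + (N2 A).toReal)
        = (N A).toReal + ((P1 A).toReal + (P2 A).toReal) := by linarith
    have e1 : ((P + (N1 + N2)) A).toReal
        = (P A).toReal + ((N1 A).toReal + (N2 A).toReal) := by
      rw [Measure.add_apply, Measure.add_apply,
        ENNReal.toReal_add (measure_ne_top _ _)
          (ENNReal.add_ne_top.mpr ⟨measure_ne_top _ _, measure_ne_top _ _⟩),
        ENNReal.toReal_add (measure_ne_top _ _) (measure_ne_top _ _)]
    have e2 : ((N + (P1 + P2)) A).toReal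
        = (N A).toReal + ((P1 A).toReal + (P2 A).toReal) := by
      rw [Measure.add_apply, Measure.add_apply,
        ENNReal.toReal_add (measure_ne_top _ _)
          (ENNReal.add_ne_top.mpr ⟨measure_ne_top _ _, measure_ne_top _ _⟩),
        ENNReal.toReal_add (measure_ne_top _ _) (measure_ne_top _ _)]
    exact (ENNReal.toReal_eq_toReal_iff' (measure_ne_top _ _) (measure_ne_top _ _)).mp
      (by rw [e1, e2, hreal])
  have hint : ∫ x, f x ∂P + (∫ x, f x ∂N1 + ∫ x, f x ∂N2)
      = ∫ x, f x ∂N + (∫ x, f x ∂P1 + ∫ x, f x ∂P2) := by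
    have h := congrArg (fun m : Measure X => ∫ x, f x ∂m) key
    rwa [integral_add_measure (continuous_integrable_aux hfc _)
        ((continuous_integrable_aux hfc _).add_measure (continuous_integrable_aux hfc _)),
      integral_add_measure (continuous_integrable_aux hfc _)
        ((continuous_integrable_aux hfc _).add_measure (continuous_integrable_aux hfc _)),
      integral_add_measure (continuous_integrable_aux hfc _) (continuous_integrable_aux hfc _),
      integral_add_measure (continuous_integrable_aux hfc _) (continuous_integrable_aux hfc _)]
      at h
  show (∫ x, f x ∂P) - (∫ x, f x ∂N)
      = ((∫ x, f x ∂P1) - (∫ x, f x ∂N1)) + ((∫ x, f x ∂P2) - (∫ x, f x ∂N2))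
  linarith

lemma abs_sIntegral_le_lip (ξ : SignedMeasure X) {f : X → ℝ} (hfc : Continuous f)
    {L : ℝ} (hfL : ∀ x y, |f x - f y| ≤ L * dist x y)
    (π : Measure (X × X)) [IsFiniteMeasure π]
    (hπ : ∀ A : Set X, MeasurableSet A →
      ξ A = (π (Set.univ ×ˢ A)).toReal - (π (A ×ˢ Set.univ)).toReal) :
    |sIntegral ξ f| ≤ L * ∫ z, dist z.1 z.2 ∂π := by
  set P := ξ.toJordanDecomposition.posPart
  set N := ξ.toJordanDecomposition.negPart
  set π₁ := π.map Prod.fst with hπ₁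
  set π₂ := π.map Prod.snd with hπ₂
  haveI : IsFiniteMeasure π₁ := by rw [hπ₁]; infer_instance
  haveI : IsFiniteMeasure π₂ := by rw [hπ₂]; infer_instance
  have keq : P + π₁ = N + π₂ := by
    ext A hA
    have h1 := signedMeasure_apply_eq ξ hA
    have h2 := hπ A hA
    have m1 : π₁ A = π (A ×ˢ Set.univ) := by
      rw [hπ₁, Measure.map_apply measurable_fst hA]
      congr 1
      ext z
      simp [Set.mem_prod]
    have m2 : π₂ A = π (Set.univ ×ˢ A) := by
      rw [hπ₂, Measure.map_apply measurable_snd hA]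
      congr 1
      ext z
      simp [Set.mem_prod]
    rw [h1] at h2
    have hreal : (P A).toReal + (π₁ A).toReal = (N A).toReal + (π₂ A).toReal := by
      rw [m1, m2]; linarith
    have e1 : ((P + π₁) A).toReal = (P A).toReal + (π₁ A).toReal := by
      rw [Measure.add_apply, ENNReal.toReal_add (measure_ne_top _ _) (measure_ne_top _ _)]
    have e2 : ((N + π₂) A).toReal = (N A).toReal + (π₂ A).toReal := by
      rw [Measure.add_apply, ENNReal.toReal_add (measure_ne_top _ _) (measure_ne_top _ _)]
    exact (ENNReal.toReal_eq_toReal_iff' (measure_ne_top _ _) (measure_ne_top _ _)).mp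
      (by rw [e1, e2, hreal])
  have hint : ∫ x, f x ∂P + ∫ x, f x ∂π₁ = ∫ x, f x ∂N + ∫ x, f x ∂π₂ := by
    have h := congrArg (fun m : Measure X => ∫ x, f x ∂m) keq
    rwa [integral_add_measure (continuous_integrable_aux hfc _) (continuous_integrable_aux hfc _),
      integral_add_measure (continuous_integrable_aux hfc _) (continuous_integrable_aux hfc _)]
      at h
  have hmap1 : ∫ x, f x ∂π₁ = ∫ z, f z.1 ∂π := by
    rw [hπ₁]
    exact integral_map measurable_fst.aemeasurable hfc.aestronglyMeasurable
  have hmap2 : ∫ x, f x ∂π₂ = ∫ z, f z.2 ∂π := by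
    rw [hπ₂]
    exact integral_map measurable_snd.aemeasurable hfc.aestronglyMeasurable
  have hi1 : Integrable (fun z : X × X => f z.1) π :=
    continuous_integrable_aux (hfc.comp continuous_fst) π
  have hi2 : Integrable (fun z : X × X => f z.2) π :=
    continuous_integrable_aux (hfc.comp continuous_snd) π
  have hsub : sIntegral ξ f = ∫ z, (f z.2 - f z.1) ∂π := by
    rw [integral_sub hi2 hi1]
    show (∫ x, f x ∂P) - (∫ x, f x ∂N) = _
    rw [← hmap1, ← hmap2]
    linarith
  have hidist : Integrable (fun z : X × X => dist z.1 z.2) π :=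
    continuous_integrable_aux continuous_dist π
  calc |sIntegral ξ f| = |∫ z, (f z.2 - f z.1) ∂π| := by rw [hsub]
  _ ≤ ∫ z, |f z.2 - f z.1| ∂π := by
      simpa [Real.norm_eq_abs] using
        norm_integral_le_integral_norm (μ := π) (fun z : X × X => f z.2 - f z.1)
  _ ≤ ∫ z, L * dist z.1 z.2 ∂π := by
      refine integral_mono (hi2.sub hi1).abs (hidist.const_mul L) fun z => ?_
      calc |f z.2 - f z.1| ≤ L * dist z.2 z.1 := hfL z.2 z.1
      _ = L * dist z.1 z.2 := by rw [dist_comm]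
  _ = L * ∫ z, dist z.1 z.2 ∂π := integral_const_mul L _

lemma KR_set_nonempty (ξ : SignedMeasure X) (hξ : ξ Set.univ = 0) :
    {r : ℝ | ∃ π : Measure (X × X), IsFiniteMeasure π ∧
      (∀ A : Set X, MeasurableSet A →
        ξ A = (π (Set.univ ×ˢ A)).toReal - (π (A ×ˢ Set.univ)).toReal) ∧
      r = ∫ z, dist z.1 z.2 ∂π}.Nonempty := by
  set P := ξ.toJordanDecomposition.posPart with hPdef
  set N := ξ.toJordanDecomposition.negPart with hNdef
  have h0 := signedMeasure_apply_eq ξ MeasurableSet.univ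
  rw [hξ] at h0
  have htR : (N Set.univ).toReal = (P Set.univ).toReal := by linarith
  have hPN : N Set.univ = P Set.univ :=
    (ENNReal.toReal_eq_toReal_iff' (measure_ne_top _ _) (measure_ne_top _ _)).mp htR
  rcases eq_or_ne (P Set.univ) 0 with hm | hm
  · refine ⟨∫ z, dist z.1 z.2 ∂(0 : Measure (X × X)), 0, inferInstance, ?_, rfl⟩
    intro A hA
    have hPA : P A = 0 := measure_mono_null (Set.subset_univ A) hm
    have hNA : N A = 0 := measure_mono_null (Set.subset_univ A) (hPN.trans hm)
    rw [signedMeasure_apply_eq ξ hA]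
    simp [← hPdef, ← hNdef, hPA, hNA]
  · set m := P Set.univ with hmdef
    have hmtop : m ≠ ∞ := measure_ne_top _ _
    refine ⟨_, m⁻¹ • (N.prod P), ?_, ?_, rfl⟩
    · constructor
      rw [Measure.smul_apply, smul_eq_mul]
      exact ENNReal.mul_lt_top (Ne.lt_top (ENNReal.inv_ne_top.mpr hm)) (measure_lt_top _ _)
    · intro A hA
      have hA1 : (m⁻¹ • (N.prod P)) (Set.univ ×ˢ A) = P A := by
        rw [Measure.smul_apply, smul_eq_mul, Measure.prod_prod, hPN, ← mul_assoc,
          ENNReal.inv_mul_cancel hm hmtop, one_mul]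
      have hA2 : (m⁻¹ • (N.prod P)) (A ×ˢ Set.univ) = N A := by
        rw [Measure.smul_apply, smul_eq_mul, Measure.prod_prod, ← hmdef,
          mul_comm (N A) m, ← mul_assoc, ENNReal.inv_mul_cancel hm hmtop, one_mul]
      rw [hA1, hA2]
      exact signedMeasure_apply_eq ξ hA

lemma lipConst_spec {f : X → ℝ} (hf : ∃ K : NNReal, LipschitzWith K f) :
    ∀ x y, |f x - f y| ≤ lipConst f * dist x y := by
  obtain ⟨K, hK⟩ := hf
  have hmem : (K : ℝ) ∈ {K : ℝ | 0 ≤ K ∧ ∀ x y, |f x - f y| ≤ K * dist x y} := by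
    refine ⟨K.coe_nonneg, fun x y => ?_⟩
    have := hK.dist_le_mul x y
    rwa [Real.dist_eq] at this
  intro x y
  rcases eq_or_ne x y with rfl | hxy
  · simp [lipConst]
  · have hd : 0 < dist x y := dist_pos.mpr hxy
    have hle : |f x - f y| / dist x y ≤ lipConst f :=
      le_csInf ⟨_, hmem⟩ fun b hb => (div_le_iff₀ hd).mpr (hb.2 x y)
    calc |f x - f y| = |f x - f y| / dist x y * dist x y := by field_simp
    _ ≤ lipConst f * dist x y := mul_le_mul_of_nonneg_right hle hd.le

lemma supNorm_spec {f : X → ℝ} (hfc : Continuous f) : ∀ x, |f x| ≤ supNorm f := by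
  have bdd : BddAbove (Set.range fun x => |f x|) := by
    rw [← Set.image_univ]
    exact (isCompact_univ.image hfc.abs).bddAbove
  intro x
  exact le_ciSup bdd x

end Main

end AuxLemmas

/-- The fundamental duality inequality between the `p`-Kantorovich and
`q`-Lipschitz norms. -/
theorem abs_sIntegral_le_pKnorm_mul_qLnorm {X : Type*} [MetricSpace X] [CompactSpace X]
    [MeasurableSpace X] [BorelSpace X] (p q : ℝ≥0∞) (hpq : HolderConj p q)
    (μ : SignedMeasure X) (f : X → ℝ) (hf : ∃ K, LipschitzWith K f) :
    |sIntegral μ f| ≤ pKnorm p μ * qLnorm q f := by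
  obtain ⟨K, hK⟩ := hf
  have hfc : Continuous f := hK.continuous
  have hLspec := lipConst_spec ⟨K, hK⟩
  have hL0 : 0 ≤ lipConst f := Real.sInf_nonneg fun r hr => hr.1
  have hM := supNorm_spec hfc
  have hM0 : 0 ≤ supNorm f := Real.iSup_nonneg fun x => abs_nonneg _
  have hQ0 : 0 ≤ qLnorm q f := lp2_nonneg hL0 hM0
  have key : ∀ r ∈ {r : ℝ | ∃ ξ : SignedMeasure X, ξ Set.univ = 0 ∧
      r = lp2 p (KRnorm ξ) (TVnorm (μ - ξ))},
      |sIntegral μ f| ≤ qLnorm q f * r := by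
    rintro r ⟨ξ, hξ, rfl⟩
    have hKR : |sIntegral ξ f| ≤ lipConst f * KRnorm ξ := by
      apply le_mul_csInf_aux hL0 (KR_set_nonempty ξ hξ)
      rintro r ⟨π, hfin, hπ, rfl⟩
      haveI := hfin
      exact abs_sIntegral_le_lip ξ hfc hLspec π hπ
    have hTVb : |sIntegral (μ - ξ) f| ≤ supNorm f * TVnorm (μ - ξ) :=
      abs_sIntegral_le_TV (μ - ξ) hfc hM
    have hsplit : sIntegral μ f = sIntegral (μ - ξ) f + sIntegral ξ f := by
      have h := sIntegral_add (μ - ξ) ξ hfc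
      rwa [sub_add_cancel] at h
    calc |sIntegral μ f| ≤ |sIntegral ξ f| + |sIntegral (μ - ξ) f| := by
          rw [hsplit]; exact (abs_add_le _ _).trans_eq (add_comm _ _)
    _ ≤ KRnorm ξ * lipConst f + TVnorm (μ - ξ) * supNorm f := by
          rw [mul_comm (KRnorm ξ), mul_comm (TVnorm (μ - ξ))]
          exact add_le_add hKR hTVb
    _ ≤ lp2 p (KRnorm ξ) (TVnorm (μ - ξ)) * lp2 q (lipConst f) (supNorm f) :=
          holder_lp2 hpq (KRnorm_nonneg ξ) (TVnorm_nonneg _) hL0 hM0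
    _ = qLnorm q f * lp2 p (KRnorm ξ) (TVnorm (μ - ξ)) := mul_comm _ _
  have hS : {r : ℝ | ∃ ξ : SignedMeasure X, ξ Set.univ = 0 ∧
      r = lp2 p (KRnorm ξ) (TVnorm (μ - ξ))}.Nonempty :=
    ⟨lp2 p (KRnorm 0) (TVnorm (μ - 0)), 0, by simp, rfl⟩
  have h := le_mul_csInf_aux hQ0 hS key
  rw [mul_comm]
  exact h
end

section
/- Conversely, if ξ*, π*, f* are all optimal (ξ* attains the p-Kantorovich infimum, π* is an optimal coupling for ξ*, and f* attains the dual supremum with ‖f*‖_{qL} = 1), then conditions (ii)–(iv) hold: ‖f*‖_L ‖ξ*‖_{KR} + ‖f*‖_∞ ‖μ − ξ*‖_{TV} = (‖ξ*‖_{KR}^p + ‖μ − ξ*‖_{TV}^p)^{1/p}, f*(x) − f*(y) = ‖f*‖_L d(x,y) on the support of π*, and f* = ±‖f*‖_∞ on the supports of (μ − ξ*)_±. -/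
open MeasureTheory ENNReal Filter Topology

noncomputable section

variable {X : Type*} [MeasurableSpace X]

namespace OptAux

lemma sm_apply {X : Type*} [MeasurableSpace X] (s : SignedMeasure X) {A : Set X}
    (hA : MeasurableSet A) :
    s A = (s.toJordanDecomposition.posPart A).toReal
        - (s.toJordanDecomposition.negPart A).toReal := by
  conv_lhs => rw [← s.toSignedMeasure_toJordanDecomposition]
  rw [JordanDecomposition.toSignedMeasure, Measure.toSignedMeasure_sub_apply hA]
  rfl

lemma measure_eq_of_toReal {X : Type*} [MeasurableSpace X] {ν ρ : Measure X}
    [IsFiniteMeasure ν] [IsFiniteMeasure ρ]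
    (h : ∀ A : Set X, MeasurableSet A → (ν A).toReal = (ρ A).toReal) : ν = ρ :=
  Measure.ext fun A hA =>
    (ENNReal.toReal_eq_toReal_iff' (measure_ne_top _ _) (measure_ne_top _ _)).mp (h A hA)

lemma cont_integrable {Y : Type*} [MeasurableSpace Y] [TopologicalSpace Y]
    [OpensMeasurableSpace Y] [T2Space Y] [CompactSpace Y]
    (ν : Measure Y) [IsFiniteMeasure ν] {g : Y → ℝ} (hg : Continuous g) :
    Integrable g ν :=
  hg.integrable_of_hasCompactSupport (isClosed_tsupport g).isCompact

lemma vanish_on_msupport {Y : Type*} [MeasurableSpace Y] [TopologicalSpace Y]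
    [OpensMeasurableSpace Y] (ν : Measure Y) [IsFiniteMeasure ν] {g : Y → ℝ}
    (hg : Continuous g) (hg0 : ∀ y, 0 ≤ g y) (hint : Integrable g ν)
    (hI : ∫ y, g y ∂ν = 0) : ∀ y ∈ msupport ν, g y = 0 := by
  intro y hy
  by_contra hne
  have hgy : 0 < g y := lt_of_le_of_ne (hg0 y) (Ne.symm hne)
  set U := {z | g y / 2 < g z} with hUdef
  have hU : IsOpen U := isOpen_lt continuous_const hg
  have hyU : y ∈ U := by simp only [hUdef, Set.mem_setOf_eq]; linarith
  have hνU : ν U ≠ 0 := hy U hU hyU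
  have hpos : 0 < (ν U).toReal := ENNReal.toReal_pos hνU (measure_ne_top ν U)
  have h1 : g y / 2 * (ν U).toReal ≤ ∫ z in U, g z ∂ν :=
    setIntegral_ge_of_const_le_real hU.measurableSet (measure_ne_top ν U)
      (fun z hz => le_of_lt hz) hint.integrableOn
  have h2 : ∫ z in U, g z ∂ν ≤ ∫ z, g z ∂ν :=
    setIntegral_le_integral hint (Filter.Eventually.of_forall hg0)
  nlinarith

lemma lp2_holder {p q : ℝ≥0∞} (hpq : HolderConj p q) {a b c d : ℝ}
    (ha : 0 ≤ a) (hb : 0 ≤ b) (hc : 0 ≤ c) (hd : 0 ≤ d) :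
    a * c + b * d ≤ lp2 q a b * lp2 p c d := by
  obtain ⟨hp1, hq1, hsum⟩ := hpq
  have hp0 : p ≠ 0 := fun h => by simp [h] at hp1
  have hq0 : q ≠ 0 := fun h => by simp [h] at hq1
  rcases eq_or_ne p ∞ with hp | hp
  · have hq : q = 1 := by
      rw [hp] at hsum
      simp only [one_div, ENNReal.inv_top, zero_add] at hsum
      rwa [ENNReal.inv_eq_one] at hsum
    subst hq
    rw [hp]
    simp only [lp2, if_neg (one_ne_top), if_pos rfl, if_true, ENNReal.toReal_one, one_div_one,
      Real.rpow_one]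
    nlinarith [le_max_left c d, le_max_right c d]
  rcases eq_or_ne q ∞ with hq | hq
  · have hp' : p = 1 := by
      rw [hq] at hsum
      simp only [one_div, ENNReal.inv_top, add_zero] at hsum
      rwa [ENNReal.inv_eq_one] at hsum
    subst hp'
    rw [hq]
    simp only [lp2, if_neg (one_ne_top), if_pos rfl, if_true, ENNReal.toReal_one, one_div_one,
      Real.rpow_one]
    nlinarith [le_max_left a b, le_max_right a b]
  · have hp1' : p ≠ 1 := by
      rintro rfl
      rw [show (1 : ℝ≥0∞) / 1 = 1 by simp] at hsum
      have h0 : (1 : ℝ≥0∞) + 1 / q = 1 + 0 := by rw [add_zero]; exact hsum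
      have : 1 / q = 0 := by
        exact (ENNReal.add_right_inj one_ne_top).mp h0
      rw [one_div, ENNReal.inv_eq_zero] at this
      exact hq this
    have hpt : 1 < p.toReal := by
      have h1p : (1 : ℝ≥0∞) < p := lt_of_le_of_ne hp1 (Ne.symm hp1')
      have := (ENNReal.toReal_lt_toReal one_ne_top hp).mpr h1p
      simpa using this
    have hsum' : 1 / p.toReal + 1 / q.toReal = 1 := by
      have h1p : 1 / p ≠ ∞ := by rw [one_div]; simp [ENNReal.inv_eq_top, hp0]
      have h1q : 1 / q ≠ ∞ := by rw [one_div]; simp [ENNReal.inv_eq_top, hq0]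
      have := congrArg ENNReal.toReal hsum
      rwa [ENNReal.toReal_add h1p h1q, ENNReal.toReal_div, ENNReal.toReal_div,
        ENNReal.toReal_one] at this
    have hconj : p.toReal.HolderConjugate q.toReal :=
      Real.holderConjugate_iff.mpr ⟨hpt, by rw [← one_div, ← one_div]; exact hsum'⟩
    have key := Real.inner_le_Lp_mul_Lq (s := Finset.univ) ![c, d] ![a, b] hconj
    simp only [Fin.sum_univ_two, Matrix.cons_val_zero, Matrix.cons_val_one, Matrix.head_cons,
      abs_of_nonneg ha, abs_of_nonneg hb, abs_of_nonneg hc, abs_of_nonneg hd] at key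
    rw [lp2, lp2, if_neg hp, if_neg hq]
    calc a * c + b * d = c * a + d * b := by ring
    _ ≤ (c ^ p.toReal + d ^ p.toReal) ^ (1 / p.toReal) *
        (a ^ q.toReal + b ^ q.toReal) ^ (1 / q.toReal) := key
    _ = (a ^ q.toReal + b ^ q.toReal) ^ (1 / q.toReal) *
        (c ^ p.toReal + d ^ p.toReal) ^ (1 / p.toReal) := mul_comm _ _

end OptAux

lemma OptAux.sIntegral_add {X : Type*} [MeasurableSpace X] (s t : SignedMeasure X) (f : X → ℝ)
    (h1 : Integrable f s.toJordanDecomposition.posPart)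
    (h2 : Integrable f s.toJordanDecomposition.negPart)
    (h3 : Integrable f t.toJordanDecomposition.posPart)
    (h4 : Integrable f t.toJordanDecomposition.negPart)
    (h5 : Integrable f (s + t).toJordanDecomposition.posPart)
    (h6 : Integrable f (s + t).toJordanDecomposition.negPart) :
    sIntegral (s + t) f = sIntegral s f + sIntegral t f := by
  have key : (s + t).toJordanDecomposition.posPart +
      (s.toJordanDecomposition.negPart + t.toJordanDecomposition.negPart) =
      (s + t).toJordanDecomposition.negPart +
      (s.toJordanDecomposition.posPart + t.toJordanDecomposition.posPart) := by
    apply OptAux.measure_eq_of_toReal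
    intro A hA
    have e1 := OptAux.sm_apply s hA
    have e2 := OptAux.sm_apply t hA
    have e3 := OptAux.sm_apply (s + t) hA
    have e4 : (s + t) A = s A + t A := VectorMeasure.add_apply s t A
    simp only [Measure.add_apply]
    rw [ENNReal.toReal_add (measure_ne_top _ _)
        (ENNReal.add_ne_top.mpr ⟨measure_ne_top _ _, measure_ne_top _ _⟩),
      ENNReal.toReal_add (measure_ne_top _ _) (measure_ne_top _ _),
      ENNReal.toReal_add (measure_ne_top _ _)
        (ENNReal.add_ne_top.mpr ⟨measure_ne_top _ _, measure_ne_top _ _⟩),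
      ENNReal.toReal_add (measure_ne_top _ _) (measure_ne_top _ _)]
    linarith
  have hint := congrArg (fun ν : Measure X => ∫ x, f x ∂ν) key
  rw [integral_add_measure h5 (h2.add_measure h4), integral_add_measure h2 h4,
    integral_add_measure h6 (h1.add_measure h3), integral_add_measure h1 h3] at hint
  simp only [sIntegral]
  linarith


end

/-- Necessity of the optimality conditions: if `ξ*`, `π*`, `f*` are all optimal,
then conditions (ii)–(iv) hold. -/
theorem optimality_conditions_necessary {X : Type*} [MetricSpace X] [CompactSpace X]
    [MeasurableSpace X] [BorelSpace X] (p q : ℝ≥0∞) (hpq : HolderConj p q)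
    (μ ξs : SignedMeasure X) (hξ : ξs Set.univ = 0)
    (π : Measure (X × X)) [IsFiniteMeasure π]
    (hπ : ∀ A : Set X, MeasurableSet A →
      ξs A = (π (Set.univ ×ˢ A)).toReal - (π (A ×ˢ Set.univ)).toReal)
    (f : X → ℝ) (hf : ∃ K, LipschitzWith K f)
    (hξopt : lp2 p (KRnorm ξs) (TVnorm (μ - ξs)) = pKnorm p μ)
    (hπopt : (∫ z, dist z.1 z.2 ∂π) = KRnorm ξs)
    (h1 : qLnorm q f = 1)
    (hfopt : sIntegral μ f = pKnorm p μ) :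
    lipConst f * KRnorm ξs + supNorm f * TVnorm (μ - ξs)
        = lp2 p (KRnorm ξs) (TVnorm (μ - ξs)) ∧
    (∀ z ∈ msupport π, f z.2 - f z.1 = lipConst f * dist z.1 z.2) ∧
    (∀ x ∈ msupport (μ - ξs).toJordanDecomposition.posPart, f x = supNorm f) ∧
    (∀ x ∈ msupport (μ - ξs).toJordanDecomposition.negPart, f x = -supNorm f) := by
  classical
  obtain ⟨K, hK⟩ := hf
  have hfc : Continuous f := hK.continuous
  set P := (μ - ξs).toJordanDecomposition.posPart with hPdef
  set N := (μ - ξs).toJordanDecomposition.negPart with hNdef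
  have hKR0 : 0 ≤ KRnorm ξs := hπopt ▸ integral_nonneg fun z => dist_nonneg
  have hTV0 : 0 ≤ TVnorm (μ - ξs) := ENNReal.toReal_nonneg
  have hlip0 : 0 ≤ lipConst f := Real.sInf_nonneg fun x hx => hx.1
  have hsup0 : 0 ≤ supNorm f := Real.iSup_nonneg fun x => abs_nonneg _
  -- sup bound
  have hb : ∀ x, |f x| ≤ supNorm f := by
    cases isEmpty_or_nonempty X with
    | inl h => exact fun x => isEmptyElim x
    | inr h =>
      have hbdd : BddAbove (Set.range fun x : X => |f x|) := by
        have := (isCompact_univ (X := X)).bddAbove_image hfc.abs.continuousOn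
        rwa [Set.image_univ] at this
      exact fun x => le_ciSup hbdd x
  -- Lipschitz bound
  have hKS : (K : ℝ) ∈ {L : ℝ | 0 ≤ L ∧ ∀ x y, |f x - f y| ≤ L * dist x y} :=
    ⟨K.coe_nonneg, fun x y => by
      have := hK.dist_le_mul x y
      rwa [Real.dist_eq] at this⟩
  have hlip : ∀ x y : X, |f x - f y| ≤ lipConst f * dist x y := by
    intro x y
    rcases (dist_nonneg : (0:ℝ) ≤ dist x y).eq_or_lt with h | h
    · have hxy : x = y := dist_eq_zero.mp h.symm
      subst hxy
      simp
    · have hd : |f x - f y| / dist x y ≤ lipConst f := by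
        apply le_csInf ⟨(K : ℝ), hKS⟩
        intro b hb'
        rw [div_le_iff₀ h]
        exact hb'.2 x y
      calc |f x - f y| = |f x - f y| / dist x y * dist x y := by field_simp
      _ ≤ lipConst f * dist x y := mul_le_mul_of_nonneg_right hd h.le
  -- step A : additivity
  have hAdd : sIntegral μ f = sIntegral ξs f + sIntegral (μ - ξs) f := by
    have hμeq : μ = ξs + (μ - ξs) := by abel
    calc sIntegral μ f = sIntegral (ξs + (μ - ξs)) f := by rw [← hμeq]
    _ = sIntegral ξs f + sIntegral (μ - ξs) f :=
      OptAux.sIntegral_add _ _ f (OptAux.cont_integrable _ hfc) (OptAux.cont_integrable _ hfc)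
        (OptAux.cont_integrable _ hfc) (OptAux.cont_integrable _ hfc)
        (OptAux.cont_integrable _ hfc) (OptAux.cont_integrable _ hfc)
  -- step B : sIntegral ξs f as an integral against π
  haveI hfin2 : IsFiniteMeasure (π.map Prod.snd) :=
    ⟨by rw [Measure.map_apply measurable_snd MeasurableSet.univ]; exact measure_lt_top _ _⟩
  haveI hfin1 : IsFiniteMeasure (π.map Prod.fst) :=
    ⟨by rw [Measure.map_apply measurable_fst MeasurableSet.univ]; exact measure_lt_top _ _⟩
  have hintf2 : Integrable (fun z : X × X => f z.2) π :=
    OptAux.cont_integrable π (hfc.comp continuous_snd)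
  have hintf1 : Integrable (fun z : X × X => f z.1) π :=
    OptAux.cont_integrable π (hfc.comp continuous_fst)
  have hB : sIntegral ξs f = ∫ z, (f z.2 - f z.1) ∂π := by
    have hkey : ξs.toJordanDecomposition.posPart + π.map Prod.fst
        = ξs.toJordanDecomposition.negPart + π.map Prod.snd := by
      apply OptAux.measure_eq_of_toReal
      intro A hA
      have e1 := OptAux.sm_apply ξs hA
      have e2 := hπ A hA
      have m2 : (π.map Prod.snd) A = π (Set.univ ×ˢ A) := by
        rw [Measure.map_apply measurable_snd hA]
        congr 1
        ext z
        simp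
      have m1 : (π.map Prod.fst) A = π (A ×ˢ Set.univ) := by
        rw [Measure.map_apply measurable_fst hA]
        congr 1
        ext z
        simp
      simp only [Measure.add_apply]
      rw [ENNReal.toReal_add (measure_ne_top _ _) (measure_ne_top _ _),
        ENNReal.toReal_add (measure_ne_top _ _) (measure_ne_top _ _), m1, m2]
      linarith
    have hint := congrArg (fun ν : Measure X => ∫ x, f x ∂ν) hkey
    rw [integral_add_measure (OptAux.cont_integrable _ hfc) (OptAux.cont_integrable _ hfc),
      integral_add_measure (OptAux.cont_integrable _ hfc) (OptAux.cont_integrable _ hfc)] at hint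
    have hmap2 : ∫ x, f x ∂(π.map Prod.snd) = ∫ z, f z.2 ∂π :=
      integral_map measurable_snd.aemeasurable hfc.aestronglyMeasurable
    have hmap1 : ∫ x, f x ∂(π.map Prod.fst) = ∫ z, f z.1 ∂π :=
      integral_map measurable_fst.aemeasurable hfc.aestronglyMeasurable
    rw [integral_sub hintf2 hintf1]
    simp only [sIntegral]
    linarith
  -- step C : the three inequalities
  have hdistint : Integrable (fun z : X × X => dist z.1 z.2) π :=
    OptAux.cont_integrable π (continuous_fst.dist continuous_snd)
  have hptw : ∀ z : X × X, f z.2 - f z.1 ≤ lipConst f * dist z.1 z.2 := by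
    intro z
    calc f z.2 - f z.1 ≤ |f z.2 - f z.1| := le_abs_self _
    _ ≤ lipConst f * dist z.2 z.1 := hlip z.2 z.1
    _ = lipConst f * dist z.1 z.2 := by rw [dist_comm]
  have hI1 : sIntegral ξs f ≤ lipConst f * KRnorm ξs := by
    rw [hB, ← hπopt, ← integral_const_mul]
    exact integral_mono (hintf2.sub hintf1) (hdistint.const_mul _) hptw
  have hc1 : ∫ x, f x ∂P ≤ supNorm f * (P Set.univ).toReal := by
    have h := integral_mono (μ := P) (OptAux.cont_integrable _ hfc)
      (integrable_const (supNorm f)) (fun x => (le_abs_self (f x)).trans (hb x))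
    rwa [integral_const, smul_eq_mul, mul_comm] at h
  have hc2 : -∫ x, f x ∂N ≤ supNorm f * (N Set.univ).toReal := by
    rw [← integral_neg]
    have h := integral_mono (μ := N) (OptAux.cont_integrable _ hfc).neg
      (integrable_const (supNorm f)) (fun x => (neg_le_abs (f x)).trans (hb x))
    rwa [integral_const, smul_eq_mul, mul_comm] at h
  have hTVsplit : TVnorm (μ - ξs) = (P Set.univ).toReal + (N Set.univ).toReal := by
    rw [TVnorm, SignedMeasure.totalVariation, Measure.add_apply,
      ENNReal.toReal_add (measure_ne_top _ _) (measure_ne_top _ _)]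
  have hsdef : sIntegral (μ - ξs) f = ∫ x, f x ∂P - ∫ x, f x ∂N := rfl
  have hI2 : sIntegral (μ - ξs) f ≤ supNorm f * TVnorm (μ - ξs) := by
    rw [hsdef, hTVsplit, mul_add]
    linarith
  have hI3 : lipConst f * KRnorm ξs + supNorm f * TVnorm (μ - ξs)
      ≤ lp2 p (KRnorm ξs) (TVnorm (μ - ξs)) := by
    have h := OptAux.lp2_holder hpq hlip0 hsup0 hKR0 hTV0
    rw [qLnorm] at h1
    rw [h1, one_mul] at h
    exact h
  have hch : sIntegral μ f = lp2 p (KRnorm ξs) (TVnorm (μ - ξs)) := hfopt.trans hξopt.symm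
  have E1 : sIntegral ξs f = lipConst f * KRnorm ξs := by linarith
  have E2 : sIntegral (μ - ξs) f = supNorm f * TVnorm (μ - ξs) := by linarith
  have Emain : lipConst f * KRnorm ξs + supNorm f * TVnorm (μ - ξs)
      = lp2 p (KRnorm ξs) (TVnorm (μ - ξs)) := by linarith
  have E2' : ∫ x, f x ∂P - ∫ x, f x ∂N
      = supNorm f * (P Set.univ).toReal + supNorm f * (N Set.univ).toReal := by
    rw [← hsdef, E2, hTVsplit, mul_add]
  have Ec1 : ∫ x, f x ∂P = supNorm f * (P Set.univ).toReal := by linarith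
  have Ec2 : -∫ x, f x ∂N = supNorm f * (N Set.univ).toReal := by linarith
  refine ⟨Emain, ?_, ?_, ?_⟩
  · -- equality on the support of π
    have hgc : Continuous (fun z : X × X => lipConst f * dist z.1 z.2 - (f z.2 - f z.1)) := by
      apply Continuous.sub
      · exact continuous_const.mul (continuous_fst.dist continuous_snd)
      · exact (hfc.comp continuous_snd).sub (hfc.comp continuous_fst)
    have hgint : Integrable (fun z : X × X => lipConst f * dist z.1 z.2 - (f z.2 - f z.1)) π :=
      (hdistint.const_mul _).sub (hintf2.sub hintf1)
    have hg0 : ∀ z : X × X, 0 ≤ lipConst f * dist z.1 z.2 - (f z.2 - f z.1) :=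
      fun z => sub_nonneg.mpr (hptw z)
    have hmulint : Integrable (fun z : X × X => lipConst f * dist z.1 z.2) π :=
      hdistint.const_mul _
    have hsubint : Integrable (fun z : X × X => f z.2 - f z.1) π := hintf2.sub hintf1
    have hgI : ∫ z, (lipConst f * dist z.1 z.2 - (f z.2 - f z.1)) ∂π = 0 := by
      rw [integral_sub hmulint hsubint, integral_const_mul, hπopt, ← hB, E1]
      ring
    intro z hz
    have := OptAux.vanish_on_msupport π hgc hg0 hgint hgI z hz
    linarith
  · -- posPart support
    have hg0 : ∀ x, 0 ≤ supNorm f - f x := fun x => sub_nonneg.mpr ((le_abs_self _).trans (hb x))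
    have hgI : ∫ x, (supNorm f - f x) ∂P = 0 := by
      rw [integral_sub (integrable_const _) (OptAux.cont_integrable _ hfc), integral_const,
        smul_eq_mul, Measure.real]
      linarith
    intro x hx
    have := OptAux.vanish_on_msupport P (g := fun x => supNorm f - f x) (continuous_const.sub hfc) hg0
      ((integrable_const _).sub (OptAux.cont_integrable _ hfc)) hgI x hx
    linarith
  · -- negPart support
    have hg0 : ∀ x, 0 ≤ supNorm f + f x := fun x => by
      have := (neg_le_abs (f x)).trans (hb x)
      linarith
    have hgI : ∫ x, (supNorm f + f x) ∂N = 0 := by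
      rw [integral_add (integrable_const _) (OptAux.cont_integrable _ hfc), integral_const,
        smul_eq_mul, Measure.real]
      linarith
    intro x hx
    have := OptAux.vanish_on_msupport N (g := fun x => supNorm f + f x) (continuous_const.add hfc) hg0
      ((integrable_const _).add (OptAux.cont_integrable _ hfc)) hgI x hx
    linarith
end
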